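/- For any integers n ≥ 1 and i ≥ 0, the number of permutations σ of {1,…,n} with |σ| = i is at most n^{2i}/i!. -/

import Mathlib

/-- `|σ|`: the minimal number of transpositions whose product is `σ`; equivalently
`n` minus the number of orbits of `σ`. -/
def permLength {n : ℕ} (σ : Equiv.Perm (Fin n)) : ℕ :=
  σ.cycleType.sum - σ.cycleType.card

open Equiv Equiv.Perm Finset

lemma card_le_sum_cycleType {n : ℕ} (σ : Equiv.Perm (Fin n)) :
    Multiset.card σ.cycleType ≤ σ.cycleType.sum := by
  have h := Multiset.card_nsmul_le_sum (s := σ.cycleType) (a := 1)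
    (fun x hx => le_trans (by norm_num) (Equiv.Perm.two_le_of_mem_cycleType hx))
  simpa using h

lemma permLength_eq_zero_iff {n : ℕ} {σ : Equiv.Perm (Fin n)} :
    permLength σ = 0 ↔ σ = 1 := by
  constructor
  · intro h
    have h2 : 2 * Multiset.card σ.cycleType ≤ σ.cycleType.sum := by
      have := Multiset.card_nsmul_le_sum (s := σ.cycleType) (a := 2)
        (fun x hx => Equiv.Perm.two_le_of_mem_cycleType hx)
      simpa [mul_comm] using this
    have : Multiset.card σ.cycleType = 0 := by
      unfold permLength at h
      omega
    exact Equiv.Perm.card_cycleType_eq_zero.mp this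
  · rintro rfl
    simp [permLength]

lemma permLength_swap_mul {n : ℕ} {σ : Equiv.Perm (Fin n)} {x : Fin n} (hx : σ x ≠ x) :
    permLength (Equiv.swap x (σ x) * σ) + 1 = permLength σ := by
  classical
  set c := σ.cycleOf x with hc
  have hxs : x ∈ σ.support := mem_support.mpr hx
  have hmem : c ∈ σ.cycleFactorsFinset := cycleOf_mem_cycleFactorsFinset_iff.mpr hxs
  have hdisj : Equiv.Perm.Disjoint (σ * c⁻¹) c :=
    disjoint_mul_inv_of_mem_cycleFactorsFinset hmem
  set ρ := σ * c⁻¹ with hρ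
  have hσ : σ = c * ρ := by
    rw [hρ, ← (hdisj.commute).eq, inv_mul_cancel_right]
  have hcx : c x = σ x := cycleOf_apply_self σ x
  have hcyc : Equiv.Perm.IsCycle c := isCycle_cycleOf σ hx
  have hCT : σ.cycleType = c.cycleType + ρ.cycleType := by
    rw [hσ]; exact (hdisj.symm).cycleType_mul
  have hSC := card_le_sum_cycleType ρ
  by_cases hB : σ (σ x) = x
  · -- the cycle of x is a transposition
    have hswap : Equiv.swap x (σ x) ∈ σ.cycleFactorsFinset := by
      rw [mem_cycleFactorsFinset_iff]
      refine ⟨isCycle_swap (Ne.symm hx), fun y hy => ?_⟩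
      rw [Equiv.Perm.support_swap (Ne.symm hx)] at hy
      rcases Finset.mem_insert.mp hy with rfl | hy
      · rw [Equiv.swap_apply_left]
      · rw [Finset.mem_singleton] at hy
        subst hy
        rw [Equiv.swap_apply_right, hB]
    have hcs : c = Equiv.swap x (σ x) := by
      have hxsw : x ∈ (Equiv.swap x (σ x)).support := by
        rw [Equiv.Perm.support_swap (Ne.symm hx)]
        exact Finset.mem_insert_self _ _
      exact (cycle_is_cycleOf hxsw hswap).symm
    have h1 : Equiv.swap x (σ x) * σ = ρ := by
      have h2 := hσ
      rw [hcs] at h2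
      calc Equiv.swap x (σ x) * σ = Equiv.swap x (σ x) * (Equiv.swap x (σ x) * ρ) := by
            rw [← h2]
        _ = ρ := by rw [← mul_assoc, Equiv.swap_mul_self, one_mul]
    have hct : c.cycleType = {2} := by
      rw [hcyc.cycleType, hcs, Equiv.Perm.card_support_swap (Ne.symm hx)]
    rw [h1]
    unfold permLength
    rw [hCT, hct]
    simp only [Multiset.sum_add, Multiset.card_add, Multiset.sum_singleton,
      Multiset.card_singleton]
    omega
  · -- the cycle of x has length ≥ 3
    have hccx : c (c x) ≠ x := by
      rw [hcx, cycleOf_apply_apply_self]; exact hB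
    have hcx' : c x ≠ x := by rw [hcx]; exact hx
    have hcyc' : Equiv.Perm.IsCycle (Equiv.swap x (c x) * c) :=
      hcyc.swap_mul hcx' hccx
    have hsupp : (Equiv.swap x (c x) * c).support = c.support \ {x} :=
      support_swap_mul_eq c x hccx
    have hxc : x ∈ c.support := mem_support.mpr hcx'
    have hcard : (Equiv.swap x (c x) * c).support.card = c.support.card - 1 := by
      rw [hsupp, Finset.card_sdiff_of_subset (by simpa using hxc)]
      simp
    have hk3 : 3 ≤ c.support.card := by
      have h2 := hcyc'.two_le_card_support
      rw [hcard] at h2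
      omega
    have hdisj' : Equiv.Perm.Disjoint (Equiv.swap x (c x) * c) ρ := by
      have h0 : _root_.Disjoint ρ.support c.support :=
        disjoint_iff_disjoint_support.mp hdisj
      rw [disjoint_iff_disjoint_support, hsupp]
      exact h0.symm.mono_left Finset.sdiff_subset
    have hfin : Equiv.swap x (σ x) * σ = (Equiv.swap x (c x) * c) * ρ := by
      rw [← hcx, mul_assoc, ← hσ]
    have hct' : (Equiv.swap x (c x) * c).cycleType = {(c.support.card - 1 : ℕ)} := by
      rw [hcyc'.cycleType, hcard]
    rw [hfin]
    unfold permLength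
    rw [hdisj'.cycleType_mul, hct', hCT, hcyc.cycleType]
    simp only [Multiset.sum_add, Multiset.card_add, Multiset.sum_singleton,
      Multiset.card_singleton, Multiset.coe_singleton, Multiset.sum_coe,
      List.sum_singleton, List.length_singleton]
    omega
  
lemma support_swap_mul_subset' {n : ℕ} (σ : Equiv.Perm (Fin n)) (x : Fin n) :
    (Equiv.swap x (σ x) * σ).support ⊆ σ.support.erase x := by
  intro y hy
  have h := Equiv.Perm.mem_support_swap_mul_imp_mem_support_ne hy
  exact Finset.mem_erase.mpr ⟨h.2, h.1⟩

lemma support_nonempty_of_ne_one {n : ℕ} {σ : Equiv.Perm (Fin n)} (h : σ ≠ 1) :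
    σ.support.Nonempty :=
  Finset.nonempty_iff_ne_empty.mpr fun he => h (Equiv.Perm.support_eq_empty_iff.mp he)

/-- The canonical code of a permutation: peel off transpositions at the largest moved point. -/
def permCode {n : ℕ} (σ : Equiv.Perm (Fin n)) : Finset (Fin n × Fin n) :=
  if h : σ = 1 then ∅
  else
    have hs : σ.support.Nonempty := support_nonempty_of_ne_one h
    insert (σ (σ.support.max' hs), σ.support.max' hs)
      (permCode (Equiv.swap (σ.support.max' hs) (σ (σ.support.max' hs)) * σ))
termination_by σ.support.card
decreasing_by
  exact lt_of_le_of_lt (Finset.card_le_card (support_swap_mul_subset' σ _))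
    (Finset.card_erase_lt_of_mem (σ.support.max'_mem hs))

lemma permCode_one {n : ℕ} : permCode (1 : Equiv.Perm (Fin n)) = ∅ := by
  rw [permCode]
  simp

theorem permCode_snd_mem {n : ℕ} (σ : Equiv.Perm (Fin n)) :
    ∀ p ∈ permCode σ, p.2 ∈ σ.support := by
  intro p hp
  by_cases h : σ = 1
  · subst h
    rw [permCode_one] at hp
    exact absurd hp (Finset.notMem_empty p)
  · have hs : σ.support.Nonempty := support_nonempty_of_ne_one h
    rw [permCode, dif_neg h] at hp
    rcases Finset.mem_insert.mp hp with heq | hp'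
    · rw [heq]
      exact σ.support.max'_mem hs
    · have hrec := permCode_snd_mem _ p hp'
      exact Finset.mem_of_mem_erase (support_swap_mul_subset' σ _ hrec)
termination_by σ.support.card
decreasing_by
  exact lt_of_le_of_lt (Finset.card_le_card (support_swap_mul_subset' σ _))
    (Finset.card_erase_lt_of_mem (σ.support.max'_mem hs))

theorem permCode_card {n : ℕ} (σ : Equiv.Perm (Fin n)) :
    (permCode σ).card = permLength σ := by
  by_cases h : σ = 1
  · subst h
    rw [permCode_one]
    simp [permLength]
  · have hs : σ.support.Nonempty := support_nonempty_of_ne_one h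
    have hmx : σ (σ.support.max' hs) ≠ σ.support.max' hs :=
      Equiv.Perm.mem_support.mp (σ.support.max'_mem hs)
    rw [permCode, dif_neg h]
    have hnot : (σ (σ.support.max' hs), σ.support.max' hs) ∉
        permCode (Equiv.swap (σ.support.max' hs) (σ (σ.support.max' hs)) * σ) := by
      intro hmem
      have h2 := permCode_snd_mem _ _ hmem
      have h3 := support_swap_mul_subset' σ _ h2
      exact (Finset.mem_erase.mp h3).1 rfl
    rw [Finset.card_insert_of_notMem hnot, permCode_card _, permLength_swap_mul hmx]
termination_by σ.support.card
decreasing_by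
  exact lt_of_le_of_lt (Finset.card_le_card (support_swap_mul_subset' σ _))
    (Finset.card_erase_lt_of_mem (σ.support.max'_mem hs))

theorem permCode_inj {n : ℕ} (σ τ : Equiv.Perm (Fin n)) (h : permCode σ = permCode τ) :
    σ = τ := by
  by_cases h1 : σ = 1
  · subst h1
    rw [permCode_one] at h
    have h0 : permLength τ = 0 := by rw [← permCode_card, ← h]; simp
    exact (permLength_eq_zero_iff.mp h0).symm
  · have h2 : τ ≠ 1 := by
      rintro rfl
      rw [permCode_one] at h
      have h0 : permLength σ = 0 := by rw [← permCode_card, h]; simp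
      exact h1 (permLength_eq_zero_iff.mp h0)
    have hsσ : σ.support.Nonempty := support_nonempty_of_ne_one h1
    have hsτ : τ.support.Nonempty := support_nonempty_of_ne_one h2
    have hmemσ : (σ (σ.support.max' hsσ), σ.support.max' hsσ) ∈ permCode σ := by
      rw [permCode, dif_neg h1]
      exact Finset.mem_insert_self _ _
    have hmemτ : (τ (τ.support.max' hsτ), τ.support.max' hsτ) ∈ permCode τ := by
      rw [permCode, dif_neg h2]
      exact Finset.mem_insert_self _ _
    have hmm : σ.support.max' hsσ = τ.support.max' hsτ := by
      apply le_antisymm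
      · exact Finset.le_max' _ _ (permCode_snd_mem τ _ (h ▸ hmemσ))
      · exact Finset.le_max' _ _ (permCode_snd_mem σ _ (h.symm ▸ hmemτ))
    set m : Fin n := σ.support.max' hsσ with hmdef
    have hmxσ : σ m ≠ m := Equiv.Perm.mem_support.mp (σ.support.max'_mem hsσ)
    have hmxτ : τ m ≠ m := by
      rw [hmm]
      exact Equiv.Perm.mem_support.mp (τ.support.max'_mem hsτ)
    have hnotσ : ∀ a : Fin n, (a, m) ∉ permCode (Equiv.swap m (σ m) * σ) := by
      intro a hmem
      have hh := permCode_snd_mem _ _ hmem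
      have h3 := support_swap_mul_subset' σ m hh
      exact (Finset.mem_erase.mp h3).1 rfl
    have hnotτ : ∀ a : Fin n, (a, m) ∉ permCode (Equiv.swap m (τ m) * τ) := by
      intro a hmem
      have hh := permCode_snd_mem _ _ hmem
      exact (Finset.mem_erase.mp (support_swap_mul_subset' τ m hh)).1 rfl
    have heqσ : permCode σ = insert (σ m, m) (permCode (Equiv.swap m (σ m) * σ)) := by
      rw [permCode, dif_neg h1]
    have heqτ : permCode τ = insert (τ m, m) (permCode (Equiv.swap m (τ m) * τ)) := by
      have heqτ' : permCode τ = insert (τ (τ.support.max' hsτ), τ.support.max' hsτ)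
          (permCode (Equiv.swap (τ.support.max' hsτ) (τ (τ.support.max' hsτ)) * τ)) := by
        rw [permCode, dif_neg h2]
      rw [← hmm] at heqτ'
      exact heqτ'
    -- show τ m = σ m
    have hmemτ' : (τ m, m) ∈ insert (σ m, m) (permCode (Equiv.swap m (σ m) * σ)) := by
      rw [← heqσ, h, heqτ]
      exact Finset.mem_insert_self _ _
    have hab : τ m = σ m := by
      rcases Finset.mem_insert.mp hmemτ' with heq | hmem
      · exact (Prod.mk.injEq _ _ _ _ ▸ heq).1
      · exact absurd hmem (hnotσ (τ m))
    have hcodes : permCode (Equiv.swap m (σ m) * σ) = permCode (Equiv.swap m (τ m) * τ) := by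
      have e1 : permCode (Equiv.swap m (σ m) * σ) =
          (insert (σ m, m) (permCode (Equiv.swap m (σ m) * σ))).erase (σ m, m) :=
        (Finset.erase_insert (hnotσ _)).symm
      have e2 : permCode (Equiv.swap m (τ m) * τ) =
          (insert (τ m, m) (permCode (Equiv.swap m (τ m) * τ))).erase (τ m, m) :=
        (Finset.erase_insert (hnotτ _)).symm
      rw [e1, e2, ← heqσ, ← heqτ, h, hab]
    have hrec : Equiv.swap m (σ m) * σ = Equiv.swap m (τ m) * τ :=
      permCode_inj _ _ hcodes
    have : Equiv.swap m (σ m) * (Equiv.swap m (σ m) * σ) =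
        Equiv.swap m (τ m) * (Equiv.swap m (τ m) * τ) := by
      rw [hrec, hab]
    rwa [← mul_assoc, ← mul_assoc, Equiv.swap_mul_self, Equiv.swap_mul_self,
      one_mul, one_mul] at this
termination_by σ.support.card
decreasing_by
  exact lt_of_le_of_lt (Finset.card_le_card (support_swap_mul_subset' σ _))
    (Finset.card_erase_lt_of_mem (σ.support.max'_mem hsσ))

/-- the number of permutations of `{1,…,n}` of length `i` is at most
`n^{2i}/i!`. -/
theorem count_perms_of_length_le (n : ℕ) (hn : 1 ≤ n) (i : ℕ) :
    ((Finset.univ.filter fun σ : Equiv.Perm (Fin n) => permLength σ = i).card : ℝ) ≤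
      (n : ℝ) ^ (2 * i) / (Nat.factorial i : ℝ) := by
  classical
  set S := Finset.univ.filter fun σ : Equiv.Perm (Fin n) => permLength σ = i with hS
  have hmaps : ∀ σ ∈ S, permCode σ ∈
      Finset.powersetCard i (Finset.univ : Finset (Fin n × Fin n)) := by
    intro σ hσ
    rw [Finset.mem_powersetCard_univ, permCode_card]
    exact (Finset.mem_filter.mp hσ).2
  have hinj : Set.InjOn permCode (S : Set (Equiv.Perm (Fin n))) :=
    fun a _ b _ hab => permCode_inj a b hab
  have hle := Finset.card_le_card_of_injOn permCode hmaps hinj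
  rw [Finset.card_powersetCard, Finset.card_univ] at hle
  have hcard : Fintype.card (Fin n × Fin n) = n * n := by simp
  rw [hcard] at hle
  calc (S.card : ℝ) ≤ ((n * n).choose i : ℝ) := by exact_mod_cast hle
    _ ≤ (((n * n : ℕ) : ℝ)) ^ i / (Nat.factorial i : ℝ) := Nat.choose_le_pow_div i (n * n)
    _ = (n : ℝ) ^ (2 * i) / (Nat.factorial i : ℝ) := by
        push_cast
        rw [two_mul, pow_add, mul_pow]
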